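/- Let C be a Kolmogorov matrix in block upper triangular form [[C', A],[0, T]] where C' is itself a Kolmogorov matrix of size m (columns of C' sum to zero), T is invertible, and C' is irreducible. Then there is a right null vector k = (k₁, 0) of C with k₁ strictly positive, and every right null vector of C has this form up to scalar multiple. -/
import Mathlib


open Matrix

/-- A matrix is irreducible if there is no nontrivial subset `S` of indices with
`A i j = 0` for all `i ∈ S`, `j ∉ S`. -/
def MatIrreducible {m : ℕ} (A : Matrix (Fin m) (Fin m) ℝ) : Prop :=
  ¬ ∃ S : Set (Fin m), S.Nonempty ∧ Sᶜ.Nonempty ∧ ∀ i ∈ S, ∀ j ∉ S, A i j = 0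

section aux
variable {m : ℕ}

lemma kolm_diag_nonpos (C' : Matrix (Fin m) (Fin m) ℝ)
    (hoff : ∀ i j, i ≠ j → 0 ≤ C' i j) (hcol : ∀ j, ∑ i, C' i j = 0) (j : Fin m) :
    C' j j ≤ 0 := by
  have h := hcol j
  rw [← Finset.add_sum_erase _ _ (Finset.mem_univ j)] at h
  have h2 : 0 ≤ ∑ i ∈ Finset.univ.erase j, C' i j :=
    Finset.sum_nonneg fun i hi => hoff i j (Finset.ne_of_mem_erase hi)
  linarith

lemma kolm_abs_null (C' : Matrix (Fin m) (Fin m) ℝ)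
    (hoff : ∀ i j, i ≠ j → 0 ≤ C' i j) (hcol : ∀ j, ∑ i, C' i j = 0)
    (v : Fin m → ℝ) (hv : C'.mulVec v = 0) :
    C'.mulVec (fun i => |v i|) = 0 := by
  have key : ∀ i, 0 ≤ C'.mulVec (fun i => |v i|) i := by
    intro i
    have hvi : ∑ j ∈ Finset.univ.erase i, C' i j * v j = - (C' i i * v i) := by
      have h := congrFun hv i
      simp only [mulVec, dotProduct, Pi.zero_apply] at h
      rw [← Finset.add_sum_erase _ _ (Finset.mem_univ i)] at h
      linarith
    have habs : |∑ j ∈ Finset.univ.erase i, C' i j * v j|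
        ≤ ∑ j ∈ Finset.univ.erase i, C' i j * |v j| := by
      refine (Finset.abs_sum_le_sum_abs _ _).trans ?_
      refine Finset.sum_le_sum fun j hj => ?_
      rw [abs_mul, abs_of_nonneg (hoff i j (Finset.ne_of_mem_erase hj).symm)]
    rw [hvi, abs_neg, abs_mul] at habs
    have hdi : C' i i ≤ 0 := kolm_diag_nonpos C' hoff hcol i
    have heq : C'.mulVec (fun i => |v i|) i
        = C' i i * |v i| + ∑ j ∈ Finset.univ.erase i, C' i j * |v j| := by
      simp only [mulVec, dotProduct]
      rw [← Finset.add_sum_erase _ _ (Finset.mem_univ i)]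
    rw [heq]
    rw [abs_of_nonpos hdi] at habs
    nlinarith [abs_nonneg (v i)]
  have hsum : ∑ i, C'.mulVec (fun i => |v i|) i = 0 := by
    simp only [mulVec, dotProduct]
    rw [Finset.sum_comm]
    simp only [← Finset.sum_mul]
    simp [hcol]
  funext i
  have h := (Finset.sum_eq_zero_iff_of_nonneg (fun i _ => key i)).mp hsum i (Finset.mem_univ i)
  simpa using h

lemma kolm_abs_pos (C' : Matrix (Fin m) (Fin m) ℝ)
    (hoff : ∀ i j, i ≠ j → 0 ≤ C' i j) (hcol : ∀ j, ∑ i, C' i j = 0)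
    (hirr : MatIrreducible C')
    (v : Fin m → ℝ) (hv : C'.mulVec v = 0) (hv0 : v ≠ 0) :
    ∀ i, 0 < |v i| := by
  by_contra hcon
  push_neg at hcon
  obtain ⟨i₀, hi₀⟩ := hcon
  have hvi₀ : v i₀ = 0 := abs_eq_zero.mp (le_antisymm hi₀ (abs_nonneg _))
  have habs := kolm_abs_null C' hoff hcol v hv
  apply hirr
  refine ⟨{i | v i = 0}, ⟨i₀, hvi₀⟩, ?_, ?_⟩
  · obtain ⟨j, hj⟩ := Function.ne_iff.mp hv0
    exact ⟨j, by simpa using hj⟩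
  · intro i hi j hj
    have h0 := congrFun habs i
    simp only [mulVec, dotProduct, Pi.zero_apply] at h0
    have hnn : ∀ k ∈ Finset.univ, (0:ℝ) ≤ C' i k * |v k| := by
      intro k _
      rcases eq_or_ne i k with rfl | hik
      · simp [Set.mem_setOf_eq.mp hi]
      · exact mul_nonneg (hoff i k hik) (abs_nonneg _)
    have hz := (Finset.sum_eq_zero_iff_of_nonneg hnn).mp h0 j (Finset.mem_univ j)
    have hvj : v j ≠ 0 := hj
    rcases mul_eq_zero.mp hz with h | h
    · exact h
    · exact absurd (abs_eq_zero.mp h) hvj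

lemma kolm_null_eq_zero (C' : Matrix (Fin m) (Fin m) ℝ)
    (hoff : ∀ i j, i ≠ j → 0 ≤ C' i j) (hcol : ∀ j, ∑ i, C' i j = 0)
    (hirr : MatIrreducible C')
    (w : Fin m → ℝ) (hw : C'.mulVec w = 0) (i₀ : Fin m) (hwi : w i₀ = 0) :
    w = 0 := by
  by_contra hne
  have := kolm_abs_pos C' hoff hcol hirr w hw hne i₀
  rw [hwi] at this
  simp at this

end aux

/-- Let `C` be a Kolmogorov matrix in block upper triangular form
`[[C', A],[0, T]]` with `C'` an irreducible Kolmogorov matrix and `T` invertible.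
Then there is a right null vector `k = (k₁, 0)` of `C` with `k₁` strictly positive,
and every right null vector of `C` is a scalar multiple of it. -/
theorem kolmogorov_block_null_vector_structure (m p : ℕ) (hm : 0 < m)
    (C' : Matrix (Fin m) (Fin m) ℝ) (A : Matrix (Fin m) (Fin p) ℝ)
    (T : Matrix (Fin p) (Fin p) ℝ)
    (hoff : ∀ i j, i ≠ j → 0 ≤ Matrix.fromBlocks C' A 0 T i j)
    (hcol : ∀ j, ∑ i, Matrix.fromBlocks C' A 0 T i j = 0)
    (hcol' : ∀ j, ∑ i, C' i j = 0)
    (hirr : MatIrreducible C')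
    (hT : IsUnit T.det) :
    ∃ k₁ : Fin m → ℝ, (∀ i, 0 < k₁ i) ∧
      (Matrix.fromBlocks C' A 0 T).mulVec (Sum.elim k₁ 0) = 0 ∧
      ∀ v : (Fin m ⊕ Fin p) → ℝ, (Matrix.fromBlocks C' A 0 T).mulVec v = 0 →
        ∃ a : ℝ, v = a • Sum.elim k₁ 0 := by
  have hoff' : ∀ i j, i ≠ j → 0 ≤ C' i j := by
    intro i j hij
    have h := hoff (Sum.inl i) (Sum.inl j) (by simpa using hij)
    simpa using h
  have hTker : ∀ w : Fin p → ℝ, T.mulVec w = 0 → w = 0 := by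
    intro w hw
    have h1 : T⁻¹ * T = 1 := Matrix.nonsing_inv_mul T hT
    calc w = (T⁻¹ * T).mulVec w := by rw [h1, one_mulVec]
    _ = T⁻¹.mulVec (T.mulVec w) := by rw [← mulVec_mulVec]
    _ = 0 := by rw [hw, mulVec_zero]
  -- det C' = 0 via the left null vector of ones
  have hdet : C'.det = 0 := by
    rw [← Matrix.exists_vecMul_eq_zero_iff]
    refine ⟨fun _ => (1:ℝ), ?_, ?_⟩
    · intro h
      have := congrFun h ⟨0, hm⟩
      simp at this
    · funext j
      simp only [vecMul, dotProduct, one_mul, Pi.zero_apply]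
      exact hcol' j
  obtain ⟨v, hv0, hv⟩ := (Matrix.exists_mulVec_eq_zero_iff).mpr hdet
  set k₁ : Fin m → ℝ := fun i => |v i| with hk₁
  have hk₁null : C'.mulVec k₁ = 0 := kolm_abs_null C' hoff' hcol' v hv
  have hk₁pos : ∀ i, 0 < k₁ i := kolm_abs_pos C' hoff' hcol' hirr v hv hv0
  refine ⟨k₁, hk₁pos, ?_, ?_⟩
  · rw [fromBlocks_mulVec]
    simp [hk₁null]
  · intro w hw
    set w₁ : Fin m → ℝ := fun i => w (Sum.inl i)
    set w₂ : Fin p → ℝ := fun i => w (Sum.inr i)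
    have hwe : w = Sum.elim w₁ w₂ := by
      funext x; cases x <;> rfl
    rw [hwe, fromBlocks_mulVec] at hw
    have hbot : T.mulVec w₂ = 0 := by
      funext i
      have := congrFun hw (Sum.inr i)
      simpa using this
    have hw₂ : w₂ = 0 := hTker w₂ hbot
    have htop : C'.mulVec w₁ = 0 := by
      funext i
      have h := congrFun hw (Sum.inl i)
      simp only [Sum.elim_inl, Pi.add_apply, Pi.zero_apply] at h
      rw [hw₂] at h
      simpa using h
    set i₀ : Fin m := ⟨0, hm⟩
    set a : ℝ := w₁ i₀ / k₁ i₀ with ha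
    have hdiff : C'.mulVec (w₁ - a • k₁) = 0 := by
      rw [mulVec_sub, mulVec_smul, htop, hk₁null]
      simp
    have hzi : (w₁ - a • k₁) i₀ = 0 := by
      simp only [Pi.sub_apply, Pi.smul_apply, smul_eq_mul, ha]
      rw [div_mul_cancel₀ _ (hk₁pos i₀).ne', sub_self]
    have hz := kolm_null_eq_zero C' hoff' hcol' hirr _ hdiff i₀ hzi
    refine ⟨a, ?_⟩
    have hw₁ : w₁ = a • k₁ := by
      have := sub_eq_zero.mp hz
      exact this
    rw [hwe, hw₁, hw₂]
    funext x
    cases x <;> simp
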